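/- arXiv:1906.01981 — 7 statements merged into one kernel-verified Lean document; each statement's English description precedes it below -/
import Mathlib

section
/- Let θ > 1 be a real number and define φ(t) = (1 − θ + θt − t^θ)/(θ(θ−1))·(−1) = (1 − θ + θt − t^θ)/(θ(1−θ)) for t ≥ 0 (the Cressie–Read divergence generator). Then for any s < 1/(1−θ) (equivalently s such that 1 − s(1−θ) > 0), the convex conjugate satisfies φ*(s) = (1/θ)·(1 − s(1−θ))^{θ/(θ−1)} − 1/θ. -/
open Real

/-!
By Young's inequality with the conjugate exponents `θ` and `θ / (θ - 1)`, every `t ≥ 0` satisfies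
`θ t c ≤ t ^ θ + (θ - 1) c ^ (θ / (θ - 1))`, where `c = 1 - s (1 - θ)`; the gap between the claimed
value and `s t - φ t` is this slack divided by `θ (θ - 1)`. Equality in Young's inequality holds at
`t = c ^ (1 / (θ - 1))`, so the supremum is attained there.
-/

lemma mul_mul_le_rpow_add_mul_rpow_div_sub_one {p t c : ℝ} (hp : 1 < p) (ht : 0 ≤ t)
    (hc : 0 ≤ c) : p * t * c ≤ t ^ p + (p - 1) * c ^ (p / (p - 1)) := by
  have hp₀ : 0 < p := by linarith
  have hq : p / (p / (p - 1)) = p - 1 := by field_simp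
  have young := young_inequality_of_nonneg ht hc (HolderConjugate.conjExponent hp)
  rw [conjExponent] at young
  calc p * t * c ≤ p * (t ^ p / p + c ^ (p / (p - 1)) / (p / (p - 1))) := by
        rw [mul_assoc]; gcongr
    _ = t ^ p + p / (p / (p - 1)) * c ^ (p / (p - 1)) := by field_simp
    _ = t ^ p + (p - 1) * c ^ (p / (p - 1)) := by rw [hq]

lemma rpow_div_sub_one_eq_mul {p c : ℝ} (hp : 1 < p) (hc : 0 < c) :
    c ^ (p / (p - 1)) = c ^ (1 / (p - 1)) * c := by
  have hp₁ : p - 1 ≠ 0 := by linarith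
  rw [← rpow_add_one hc.ne']
  congr 1
  field_simp
  ring

lemma rpow_one_div_sub_one_rpow {p c : ℝ} (hp : 1 < p) (hc : 0 < c) :
    (c ^ (1 / (p - 1))) ^ p = c ^ (1 / (p - 1)) * c := by
  rw [← rpow_mul hc.le, ← rpow_div_sub_one_eq_mul hp hc, one_div_mul_eq_div]

lemma cressieRead_conjugate_sub_eq {θ : ℝ} (hθ₀ : θ ≠ 0) (hθ₁ : θ ≠ 1) (s t A B : ℝ) :
    ((1 / θ) * B - 1 / θ) - (s * t - (1 - θ + θ * t - A) / (θ * (1 - θ))) =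
      (A + (θ - 1) * B - θ * t * (1 - s * (1 - θ))) / (θ * (θ - 1)) := by
  have h₁ : 1 - θ ≠ 0 := sub_ne_zero.mpr (Ne.symm hθ₁)
  have h₂ : θ - 1 ≠ 0 := sub_ne_zero.mpr hθ₁
  field_simp
  ring

/-- Convex conjugate of the Cressie–Read generator
`φ(t) = (1 − θ + θt − t^θ)/(θ(1−θ))` for `θ > 1`: for `s` with `1 − s(1−θ) > 0`
(equivalently `s < 1/(1−θ)`), the conjugate value
`(1/θ)·(1 − s(1−θ))^(θ/(θ−1)) − 1/θ` is the least upper bound of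
`{s·t − φ(t) : t ≥ 0}` (powers are real powers). -/
theorem cressieRead_conjugate (θ s : ℝ) (hθ : 1 < θ) (hs : 1 - s * (1 - θ) > 0) :
    IsLUB {y : ℝ | ∃ t : ℝ, 0 ≤ t ∧
        y = s * t - (1 - θ + θ * t - t ^ θ) / (θ * (1 - θ))}
      ((1 / θ) * (1 - s * (1 - θ)) ^ (θ / (θ - 1)) - 1 / θ) := by
  have hθ₀ : 0 < θ := by linarith
  have gap := cressieRead_conjugate_sub_eq hθ₀.ne' hθ.ne' s
  set c := 1 - s * (1 - θ)
  refine IsGreatest.isLUB ⟨⟨c ^ (1 / (θ - 1)), rpow_nonneg hs.le _, ?_⟩, ?_⟩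
  · rw [rpow_one_div_sub_one_rpow hθ hs, rpow_div_sub_one_eq_mul hθ hs]
    set t₀ := c ^ (1 / (θ - 1))
    have attained := gap t₀ (t₀ * c) (t₀ * c)
    rw [show t₀ * c + (θ - 1) * (t₀ * c) - θ * t₀ * c = 0 by ring, zero_div] at attained
    linarith
  · rintro y ⟨t, ht, rfl⟩
    have slack := mul_mul_le_rpow_add_mul_rpow_div_sub_one hθ ht hs.le
    have slack_nonneg : 0 ≤ (t ^ θ + (θ - 1) * c ^ (θ / (θ - 1)) - θ * t * c) / (θ * (θ - 1)) :=
      div_nonneg (by linarith) (by nlinarith)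
    linarith [gap t (t ^ θ) (c ^ (θ / (θ - 1)))]
end

section
/- Let Σ be symmetric positive definite, μ, e ∈ ℝⁿ with e ≠ 0, and define A = eᵀΣ⁻¹e, B = μᵀΣ⁻¹e, C = μᵀΣ⁻¹μ. Let ρ > 0 satisfy 2ρ > C − B²/A, set λ* = B/A − √(B² − A(C − 2ρ))/A (with φ''(1) = 1), and x* = Σ⁻¹(μ − λ*e)/(B − λ*A). Then x* satisfies the constraint x*ᵀe = 1, and the objective value satisfies x*ᵀμ − √(2ρ · x*ᵀΣx*) = λ*. -/
/-!
Put `w = μ - λ e`, so that `x` is `Σ⁻¹ w` normalised by `eᵀΣ⁻¹w = B - λA` to satisfy `xᵀe = 1`.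
The number `λ` is the smaller root of `Aλ² - 2Bλ + C = 2ρ`, i.e. `wᵀΣ⁻¹w = 2ρ`; hence
`2ρ · xᵀΣx = (xᵀw)²` and the objective is `xᵀμ - xᵀw = λ · xᵀe = λ`.
-/

open Matrix

section SymmetricForm

variable {ι R : Type*} [Fintype ι]

theorem Matrix.IsSymm.dotProduct_mulVec_comm [CommSemiring R] {M : Matrix ι ι R}
    (hM : M.IsSymm) (u v : ι → R) : u ⬝ᵥ (M *ᵥ v) = v ⬝ᵥ (M *ᵥ u) := by
  rw [dotProduct_mulVec, ← mulVec_transpose, hM.eq, dotProduct_comm]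

variable [CommRing R] {M : Matrix ι ι R}

theorem Matrix.IsSymm.dotProduct_mulVec_sub_smul (hM : M.IsSymm) (μ e : ι → R) (c : R) :
    e ⬝ᵥ (M *ᵥ (μ - c • e)) = μ ⬝ᵥ (M *ᵥ e) - c * (e ⬝ᵥ (M *ᵥ e)) := by
  rw [mulVec_sub, mulVec_smul, dotProduct_sub, dotProduct_smul, hM.dotProduct_mulVec_comm e μ,
    smul_eq_mul]

theorem Matrix.IsSymm.dotProduct_mulVec_sub_smul_self (hM : M.IsSymm) (μ e : ι → R) (c : R) :
    (μ - c • e) ⬝ᵥ (M *ᵥ (μ - c • e)) =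
      μ ⬝ᵥ (M *ᵥ μ) - 2 * c * (μ ⬝ᵥ (M *ᵥ e)) + c ^ 2 * (e ⬝ᵥ (M *ᵥ e)) := by
  rw [sub_dotProduct, smul_dotProduct, hM.dotProduct_mulVec_sub_smul, mulVec_sub, mulVec_smul,
    dotProduct_sub, dotProduct_smul, smul_eq_mul, smul_eq_mul]
  ring

end SymmetricForm

section SmallerRoot

variable {A B C K c : ℝ}

theorem sub_mul_eq_sqrt_of_eq_sub_sqrt_div (hA : A ≠ 0) (hc : c = B / A - √C / A) :
    B - c * A = √C := by
  rw [hc]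
  field_simp
  ring

theorem quadratic_eq_of_sub_mul_eq_sqrt (hA : A ≠ 0) (hD : 0 ≤ B ^ 2 - A * (C - K))
    (hc : B - c * A = √(B ^ 2 - A * (C - K))) : C - 2 * c * B + c ^ 2 * A = K := by
  have hsq : (B - c * A) ^ 2 = B ^ 2 - A * (C - K) := by rw [hc, Real.sq_sqrt hD]
  apply mul_left_cancel₀ hA
  linear_combination hsq

end SmallerRoot

theorem sqrt_dotProduct_inv_mulVec_mul_dotProduct_mulVec {ι : Type*} [Fintype ι] [DecidableEq ι]
    {S : Matrix ι ι ℝ} (hS : S.PosDef) {a : ℝ} (ha : 0 ≤ a) (w : ι → ℝ) {x : ι → ℝ}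
    (hx : x = a⁻¹ • (S⁻¹ *ᵥ w)) :
    √(w ⬝ᵥ (S⁻¹ *ᵥ w) * (x ⬝ᵥ (S *ᵥ x))) = x ⬝ᵥ w := by
  have hK : 0 ≤ w ⬝ᵥ (S⁻¹ *ᵥ w) := by
    simpa using hS.inv.posSemidef.dotProduct_mulVec_nonneg w
  have hSx : S *ᵥ x = a⁻¹ • w := by
    rw [hx, mulVec_smul, mulVec_mulVec, mul_nonsing_inv S hS.det_pos.ne'.isUnit, one_mulVec]
  have hxw : x ⬝ᵥ w = a⁻¹ * (w ⬝ᵥ (S⁻¹ *ᵥ w)) := by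
    rw [hx, smul_dotProduct, dotProduct_comm, smul_eq_mul]
  rw [hSx, dotProduct_smul, smul_eq_mul, hxw]
  calc √(w ⬝ᵥ (S⁻¹ *ᵥ w) * (a⁻¹ * (a⁻¹ * (w ⬝ᵥ (S⁻¹ *ᵥ w)))))
      _ = √((a⁻¹ * (w ⬝ᵥ (S⁻¹ *ᵥ w))) ^ 2) := by ring_nf
      _ = a⁻¹ * (w ⬝ᵥ (S⁻¹ *ᵥ w)) := Real.sqrt_sq (by positivity)

theorem mean_deviation_kkt_general (n : ℕ) (S : Matrix (Fin n) (Fin n) ℝ) (hS : S.PosDef)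
    (μ e : Fin n → ℝ) (hind : LinearIndependent ℝ ![μ, e])
    (ρ A B C lam : ℝ)
    (hA : A = e ⬝ᵥ (S⁻¹ *ᵥ e)) (hB : B = μ ⬝ᵥ (S⁻¹ *ᵥ e))
    (hC : C = μ ⬝ᵥ (S⁻¹ *ᵥ μ))
    (hρ' : 2 * ρ > C - B ^ 2 / A)
    (hlam : lam = B / A - Real.sqrt (B ^ 2 - A * (C - 2 * ρ)) / A)
    (x : Fin n → ℝ) (hx : x = (B - lam * A)⁻¹ • (S⁻¹ *ᵥ (μ - lam • e))) :
    x ⬝ᵥ e = 1 ∧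
      x ⬝ᵥ μ - Real.sqrt (2 * ρ * (x ⬝ᵥ (S *ᵥ x))) = lam := by
  have hA0 : 0 < A := by
    simpa [hA] using hS.inv.dotProduct_mulVec_pos (by simpa using hind.ne_zero 1 : e ≠ 0)
  have hD : 0 < B ^ 2 - A * (C - 2 * ρ) := by
    rw [gt_iff_lt, sub_lt_comm, lt_div_iff₀ hA0] at hρ'
    linarith
  have hsymm : S⁻¹.IsSymm := isHermitian_iff_isSymm.mp hS.inv.isHermitian
  have hs : B - lam * A = √(B ^ 2 - A * (C - 2 * ρ)) :=
    sub_mul_eq_sqrt_of_eq_sub_sqrt_div hA0.ne' hlam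
  have hK : (μ - lam • e) ⬝ᵥ (S⁻¹ *ᵥ (μ - lam • e)) = 2 * ρ := by
    rw [hsymm.dotProduct_mulVec_sub_smul_self, ← hA, ← hB, ← hC]
    exact quadratic_eq_of_sub_mul_eq_sqrt hA0.ne' hD.le hs
  have hxe : x ⬝ᵥ e = 1 := by
    rw [hx, smul_dotProduct, dotProduct_comm, hsymm.dotProduct_mulVec_sub_smul, ← hA, ← hB,
      smul_eq_mul, inv_mul_cancel₀ (hs ▸ (Real.sqrt_pos.mpr hD).ne')]
  refine ⟨hxe, ?_⟩
  rw [← hK, sqrt_dotProduct_inv_mulVec_mul_dotProduct_mulVec hS (hs ▸ Real.sqrt_nonneg _) _ hx,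
    ← dotProduct_sub, sub_sub_cancel, dotProduct_smul, hxe, smul_eq_mul, mul_one]

/-- KKT solution of the mean-deviation portfolio problem (with `φ''(1) = 1`):
with `A = eᵀΣ⁻¹e`, `B = μᵀΣ⁻¹e`, `C = μᵀΣ⁻¹μ`, `2ρ > C − B²/A`,
`λ* = B/A − √(B² − A(C − 2ρ))/A` and `x* = Σ⁻¹(μ − λ*e)/(B − λ*A)`,
the point `x*` satisfies the budget constraint `x*ᵀe = 1` and achieves
objective value `x*ᵀμ − √(2ρ·x*ᵀΣx*) = λ*`. -/
theorem mean_deviation_kkt (n : ℕ) (S : Matrix (Fin n) (Fin n) ℝ) (hS : S.PosDef)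
    (μ e : Fin n → ℝ) (hind : LinearIndependent ℝ ![μ, e])
    (ρ A B C lam : ℝ) (hρ : 0 < ρ)
    (hA : A = e ⬝ᵥ (S⁻¹ *ᵥ e)) (hB : B = μ ⬝ᵥ (S⁻¹ *ᵥ e))
    (hC : C = μ ⬝ᵥ (S⁻¹ *ᵥ μ))
    (hρ' : 2 * ρ > C - B ^ 2 / A)
    (hlam : lam = B / A - Real.sqrt (B ^ 2 - A * (C - 2 * ρ)) / A)
    (x : Fin n → ℝ) (hx : x = (B - lam * A)⁻¹ • (S⁻¹ *ᵥ (μ - lam • e))) :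
    x ⬝ᵥ e = 1 ∧
      x ⬝ᵥ μ - Real.sqrt (2 * ρ * (x ⬝ᵥ (S *ᵥ x))) = lam :=
  mean_deviation_kkt_general n S hS μ e hind ρ A B C lam hA hB hC hρ' hlam x hx
end

section
/- Let Σ be symmetric positive definite, μ, e ∈ ℝⁿ linearly independent, A = eᵀΣ⁻¹e, B = μᵀΣ⁻¹e, C = μᵀΣ⁻¹μ. For any x ∈ ℝⁿ with xᵀe = 1, the pair (m, s) = (xᵀμ, √(xᵀΣx)) satisfies s² ≥ (A m² − 2B m + C)/(AC − B²). In particular, √(xᵀΣx) ≥ √((A(xᵀμ)² − 2B(xᵀμ) + C)/(AC − B²)). -/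
/-!
The minimum of `xᵀΣx` on the affine set `{xᵀe = 1, xᵀμ = m}` is attained at
`y = Σ⁻¹(αe + βμ)`, where `α, β` solve `αA + βB = 1`, `αB + βC = m`; this system is
solvable because `AC − B² > 0`, the strict Cauchy–Schwarz inequality for `Σ⁻¹` on the
independent vectors `μ, e`. Since `xᵀΣy = α + βm = yᵀΣy`, expanding
`0 ≤ (x − y)ᵀΣ(x − y)` gives `xᵀΣx ≥ yᵀΣy = α + βm = (Am² − 2Bm + C)/(AC − B²)`.
-/

open Matrix

variable {ι : Type*} [Fintype ι] {T : Matrix ι ι ℝ}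

lemma Matrix.IsHermitian.dotProduct_mulVec_comm (hT : T.IsHermitian) (u v : ι → ℝ) :
    u ⬝ᵥ (T *ᵥ v) = v ⬝ᵥ (T *ᵥ u) := by
  rw [dotProduct_mulVec, ← mulVec_transpose, dotProduct_comm,
    ← conjTranspose_eq_transpose_of_trivial, hT.eq]

lemma Matrix.IsHermitian.dotProduct_mulVec_sub_self (hT : T.IsHermitian) (x y : ι → ℝ) :
    (x - y) ⬝ᵥ (T *ᵥ (x - y)) =
      x ⬝ᵥ (T *ᵥ x) - 2 * (x ⬝ᵥ (T *ᵥ y)) + y ⬝ᵥ (T *ᵥ y) := by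
  simp only [mulVec_sub, dotProduct_sub, sub_dotProduct, hT.dotProduct_mulVec_comm y x]
  ring

lemma Matrix.PosDef.sq_dotProduct_mulVec_lt (hT : T.PosDef) {u v : ι → ℝ}
    (huv : LinearIndependent ℝ ![u, v]) :
    (u ⬝ᵥ (T *ᵥ v)) ^ 2 < (u ⬝ᵥ (T *ᵥ u)) * (v ⬝ᵥ (T *ᵥ v)) := by
  set a := u ⬝ᵥ (T *ᵥ u)
  set b := u ⬝ᵥ (T *ᵥ v)
  have ha : 0 < a := by simpa using hT.dotProduct_mulVec_pos (huv.ne_zero 0)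
  have hw : b • u + (-a) • v ≠ 0 := fun h ↦
    ha.ne' (by simpa using (LinearIndependent.pair_iff.mp huv _ _ h).2)
  have hpos := hT.dotProduct_mulVec_pos hw
  simp only [star_trivial, mulVec_add, mulVec_smul, dotProduct_add, add_dotProduct,
    dotProduct_smul, smul_dotProduct, smul_eq_mul, hT.1.dotProduct_mulVec_comm v u] at hpos
  nlinarith

lemma Matrix.PosSemidef.dotProduct_mulVec_le_of_dotProduct_mulVec_eq (hT : T.PosSemidef)
    {x y : ι → ℝ} (h : x ⬝ᵥ (T *ᵥ y) = y ⬝ᵥ (T *ᵥ y)) :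
    y ⬝ᵥ (T *ᵥ y) ≤ x ⬝ᵥ (T *ᵥ x) := by
  have := hT.dotProduct_mulVec_nonneg (x - y)
  rw [star_trivial, hT.1.dotProduct_mulVec_sub_self, h] at this
  linarith

/-- Efficient-frontier inequality: for `Σ` symmetric positive definite,
`μ, e` linearly independent, `A = eᵀΣ⁻¹e`, `B = μᵀΣ⁻¹e`, `C = μᵀΣ⁻¹μ`,
and any `x` with `xᵀe = 1`, setting `m = xᵀμ` and `s = √(xᵀΣx)` we have
`s² ≥ (Am² − 2Bm + C)/(AC − B²)`; in particular
`√(xᵀΣx) ≥ √((Am² − 2Bm + C)/(AC − B²))`. -/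
theorem efficient_frontier (n : ℕ) (S : Matrix (Fin n) (Fin n) ℝ) (hS : S.PosDef)
    (μ e : Fin n → ℝ) (hind : LinearIndependent ℝ ![μ, e])
    (A B C : ℝ)
    (hA : A = e ⬝ᵥ (S⁻¹ *ᵥ e)) (hB : B = μ ⬝ᵥ (S⁻¹ *ᵥ e))
    (hC : C = μ ⬝ᵥ (S⁻¹ *ᵥ μ))
    (x : Fin n → ℝ) (hx : x ⬝ᵥ e = 1) :
    (Real.sqrt (x ⬝ᵥ (S *ᵥ x))) ^ 2 ≥
        (A * (x ⬝ᵥ μ) ^ 2 - 2 * B * (x ⬝ᵥ μ) + C) / (A * C - B ^ 2) ∧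
      Real.sqrt (x ⬝ᵥ (S *ᵥ x)) ≥
        Real.sqrt ((A * (x ⬝ᵥ μ) ^ 2 - 2 * B * (x ⬝ᵥ μ) + C) / (A * C - B ^ 2)) := by
  have hD : A * C - B ^ 2 ≠ 0 := by
    have := hS.inv.sq_dotProduct_mulVec_lt hind
    rw [hA, hB, hC]; exact (sub_pos.mpr (by linarith)).ne'
  set m := x ⬝ᵥ μ
  set D := A * C - B ^ 2
  set α := (C - m * B) / D with hα
  set β := (m * A - B) / D with hβ
  set y := S⁻¹ *ᵥ (α • e + β • μ)
  have hSy : ∀ v, v ⬝ᵥ (S *ᵥ y) = α * (v ⬝ᵥ e) + β * (v ⬝ᵥ μ) := fun v ↦ by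
    rw [mulVec_mulVec, mul_nonsing_inv _ ((isUnit_iff_isUnit_det S).mp hS.isUnit), one_mulVec]
    simp only [dotProduct_add, dotProduct_smul, smul_eq_mul]
  have hy : ∀ v, y ⬝ᵥ v = α * (e ⬝ᵥ (S⁻¹ *ᵥ v)) + β * (μ ⬝ᵥ (S⁻¹ *ᵥ v)) := fun v ↦ by
    rw [dotProduct_comm, hS.inv.1.dotProduct_mulVec_comm]
    simp only [add_dotProduct, smul_dotProduct, smul_eq_mul]
  have hye : y ⬝ᵥ e = 1 := by
    rw [hy, ← hA, ← hB, hα, hβ]; field_simp; ring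
  have hyμ : y ⬝ᵥ μ = m := by
    rw [hy, hS.inv.1.dotProduct_mulVec_comm e, ← hB, ← hC, hα, hβ]; field_simp; ring
  have hval : y ⬝ᵥ (S *ᵥ y) = (A * m ^ 2 - 2 * B * m + C) / D := by
    rw [hSy, hye, hyμ, hα, hβ]; field_simp; ring
  have hmin : y ⬝ᵥ (S *ᵥ y) ≤ x ⬝ᵥ (S *ᵥ x) :=
    hS.posSemidef.dotProduct_mulVec_le_of_dotProduct_mulVec_eq (by rw [hSy, hSy, hx, hye, hyμ])
  rw [Real.sq_sqrt (by simpa using hS.posSemidef.dotProduct_mulVec_nonneg x), ← hval]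
  exact ⟨hmin, Real.sqrt_le_sqrt hmin⟩
end

section
/- Let Σ be symmetric positive definite, μ, e ∈ ℝⁿ linearly independent, A = eᵀΣ⁻¹e, B = μᵀΣ⁻¹e, C = μᵀΣ⁻¹μ. Suppose κ > 0 and δ ∈ ℝ satisfy C − B²/A < κ² < δ²A + 2δB + C and B + δA > 0. Then the optimization max over x ∈ ℝⁿ with xᵀe = 1 and κ√(xᵀΣx) − xᵀμ ≤ δ of xᵀμ has a feasible point, i.e., there exists x with xᵀe = 1 and κ√(xᵀΣx) ≤ xᵀμ + δ. -/
open Matrix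

/-! On the portfolios `x = S⁻¹ *ᵥ (a • μ + b • e)` the budget `xᵀe`, the return `xᵀμ` and the
variance `xᵀSx` are `aB + bA`, `aC + bB` and `a²C + 2abB + b²A`, so feasibility becomes a
problem in the two real unknowns `a, b`. There `κ² < δ²A + 2δB + C` is what makes
`(return + δ)² - κ² · variance` positive at its maximum along the budget line, and
`B + δA > 0` makes `return + δ` positive there. -/

lemma Real.mul_sqrt_le_of_sq_mul_le {κ q r : ℝ} (hκ : 0 ≤ κ) (hr : 0 ≤ r)
    (h : κ ^ 2 * q ≤ r ^ 2) : κ * √q ≤ r := by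
  rw [← Real.sqrt_sq hκ, ← Real.sqrt_mul (sq_nonneg κ)]
  exact (Real.sqrt_le_left hr).2 h

theorem exists_two_fund_weights {A B C κ δ : ℝ} (hA : 0 < A) (hκ : 0 ≤ κ)
    (h1 : C - B ^ 2 / A < κ ^ 2) (h2 : κ ^ 2 < δ ^ 2 * A + 2 * δ * B + C)
    (h3 : 0 < B + δ * A) :
    ∃ a b : ℝ, a * B + b * A = 1 ∧
      κ * √(a ^ 2 * C + 2 * a * b * B + b ^ 2 * A) ≤ a * C + b * B + δ := by
  set F := A * κ ^ 2 - A * C + B ^ 2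
  set G := B + δ * A
  have hF : 0 < F := by
    have := mul_lt_mul_of_pos_left h1 hA
    rw [mul_sub, mul_div_cancel₀ _ hA.ne'] at this
    linarith
  -- `a` maximises the quadratic gap `hgap` below along the budget line
  set a := G / F
  set b := (F - G * B) / (A * F)
  refine ⟨a, b, by simp only [a, b]; field_simp; ring, ?_⟩
  have hreturn : a * C + b * B + δ = G * κ ^ 2 / F := by
    simp only [a, b]; field_simp; ring
  have hgap : (a * C + b * B + δ) ^ 2 - κ ^ 2 * (a ^ 2 * C + 2 * a * b * B + b ^ 2 * A) =
      κ ^ 2 * (δ ^ 2 * A + 2 * δ * B + C - κ ^ 2) / F := by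
    simp only [a, b]; field_simp; ring
  have hgap_nonneg : 0 ≤ κ ^ 2 * (δ ^ 2 * A + 2 * δ * B + C - κ ^ 2) / F := by
    have : 0 < δ ^ 2 * A + 2 * δ * B + C - κ ^ 2 := by linarith
    positivity
  refine Real.mul_sqrt_le_of_sq_mul_le hκ (hreturn ▸ by positivity) ?_
  linarith

section
variable {n : Type*} [Fintype n] [DecidableEq n] {S : Matrix n n ℝ}

lemma Matrix.PosDef.inv_mulVec_dotProduct (hS : S.PosDef) (v w : n → ℝ) :
    (S⁻¹ *ᵥ v) ⬝ᵥ w = v ⬝ᵥ (S⁻¹ *ᵥ w) := by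
  have hsymm : S⁻¹ᵀ = S⁻¹ := by simpa using hS.inv.isHermitian.eq
  rw [dotProduct_mulVec, ← mulVec_transpose, hsymm, dotProduct_comm]

lemma Matrix.PosDef.mulVec_inv_mulVec (hS : S.PosDef) (v : n → ℝ) : S *ᵥ (S⁻¹ *ᵥ v) = v := by
  rw [mulVec_mulVec, mul_nonsing_inv _ ((isUnit_iff_isUnit_det S).1 hS.isUnit), one_mulVec]

end

theorem cco_feasible_general (n : ℕ) (S : Matrix (Fin n) (Fin n) ℝ) (hS : S.PosDef)
    (μ e : Fin n → ℝ)
    (A B C κ δ : ℝ)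
    (hA : A = e ⬝ᵥ (S⁻¹ *ᵥ e)) (hB : B = μ ⬝ᵥ (S⁻¹ *ᵥ e))
    (hC : C = μ ⬝ᵥ (S⁻¹ *ᵥ μ))
    (hκ : 0 < κ) (h1 : C - B ^ 2 / A < κ ^ 2) (h2 : κ ^ 2 < δ ^ 2 * A + 2 * δ * B + C)
    (h3 : 0 < B + δ * A) :
    ∃ x : Fin n → ℝ, x ⬝ᵥ e = 1 ∧
      κ * Real.sqrt (x ⬝ᵥ (S *ᵥ x)) - x ⬝ᵥ μ ≤ δ := by
  have he : e ≠ 0 := by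
    rintro rfl
    simp [hA, hB] at h3
  have hApos : 0 < A := by simpa [hA] using hS.inv.dotProduct_mulVec_pos he
  obtain ⟨a, b, hbudget, hrisk⟩ := exists_two_fund_weights hApos hκ.le h1 h2 h3
  set v := a • μ + b • e
  have hdot (w : Fin n → ℝ) :
      (S⁻¹ *ᵥ v) ⬝ᵥ w = a * (μ ⬝ᵥ (S⁻¹ *ᵥ w)) + b * (e ⬝ᵥ (S⁻¹ *ᵥ w)) := by
    simp only [hS.inv_mulVec_dotProduct, v, add_dotProduct, smul_dotProduct, smul_eq_mul]
  have hBsymm : e ⬝ᵥ (S⁻¹ *ᵥ μ) = B := by rw [hB, ← hS.inv_mulVec_dotProduct, dotProduct_comm]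
  have hxe : (S⁻¹ *ᵥ v) ⬝ᵥ e = a * B + b * A := by rw [hdot, hA, hB]
  have hxμ : (S⁻¹ *ᵥ v) ⬝ᵥ μ = a * C + b * B := by rw [hdot, hC, hBsymm]
  have hvar : (S⁻¹ *ᵥ v) ⬝ᵥ (S *ᵥ (S⁻¹ *ᵥ v)) = a ^ 2 * C + 2 * a * b * B + b ^ 2 * A := by
    rw [hS.mulVec_inv_mulVec, dotProduct_add, dotProduct_smul, dotProduct_smul, hxe, hxμ,
      smul_eq_mul, smul_eq_mul]
    ring
  refine ⟨S⁻¹ *ᵥ v, hxe.trans hbudget, ?_⟩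
  rw [hvar, hxμ]
  linarith

/-- Feasibility of the chance-constrained (VaR-reformulated) portfolio problem:
under `C − B²/A < κ² < δ²A + 2δB + C` and `B + δA > 0` (with `κ > 0`), there is
`x` with `xᵀe = 1` and `κ√(xᵀΣx) − xᵀμ ≤ δ`. -/
theorem cco_feasible (n : ℕ) (S : Matrix (Fin n) (Fin n) ℝ) (hS : S.PosDef)
    (μ e : Fin n → ℝ) (hind : LinearIndependent ℝ ![μ, e])
    (A B C κ δ : ℝ)
    (hA : A = e ⬝ᵥ (S⁻¹ *ᵥ e)) (hB : B = μ ⬝ᵥ (S⁻¹ *ᵥ e))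
    (hC : C = μ ⬝ᵥ (S⁻¹ *ᵥ μ))
    (hκ : 0 < κ) (h1 : C - B ^ 2 / A < κ ^ 2) (h2 : κ ^ 2 < δ ^ 2 * A + 2 * δ * B + C)
    (h3 : 0 < B + δ * A) :
    ∃ x : Fin n → ℝ, x ⬝ᵥ e = 1 ∧
      κ * Real.sqrt (x ⬝ᵥ (S *ᵥ x)) - x ⬝ᵥ μ ≤ δ :=
  cco_feasible_general n S hS μ e A B C κ δ hA hB hC hκ h1 h2 h3
end

section
/- Let Σ be symmetric positive definite, μ, e ∈ ℝⁿ linearly independent, with A = eᵀΣ⁻¹e, B = μᵀΣ⁻¹e, C = μᵀΣ⁻¹μ, and suppose ρ > 0 satisfies 2ρ > C − B²/A. Let v* = B/A − √(2ρA − (AC − B²))/A be the optimal value of the mean-deviation problem max_{xᵀe=1} {xᵀμ − √(2ρ xᵀΣx)}. Suppose κ > 0, δ ∈ ℝ satisfy the feasibility conditions C − B²/A < κ² < δ²A + 2δB + C and B + δA > 0, and let ṽ* be the optimal value of max_{xᵀe=1, κ√(xᵀΣx)−xᵀμ ≤ δ} xᵀμ. Then ṽ* ≥ v*. -/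
/-!
Since `A > 0`, `v*` is at most `B / A`, the return of the minimum-variance budget portfolio
`x₀ = S⁻¹ e / A`. With `y = S⁻¹ (μ - (B / A) e)` and `γ = C - B² / A = yᵀ S y`, the portfolios
`x₀ + s y` have return `B / A + s γ` and variance `1 / A + s² γ`; at the tangency point
`s = (δ + B / A) / (κ² - γ)` the chance constraint reduces to `κ² ≤ A (δ + B / A)² + γ`.
Conversely, Cauchy–Schwarz for the inner product of `S` bounds the excess return `xᵀμ - B / A`
of a budget portfolio by `√γ` times its deviation, so for `√γ < κ` the chance constraint bounds
the deviation, hence the return, and the supremum is a genuine one.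
-/

open Matrix

variable {ι : Type*} [Fintype ι]

lemma Matrix.PosSemidef.dotProduct_mulVec_le_sqrt_mul_sqrt {M : Matrix ι ι ℝ}
    (hM : M.PosSemidef) (x y : ι → ℝ) :
    x ⬝ᵥ (M *ᵥ y) ≤ √(x ⬝ᵥ (M *ᵥ x)) * √(y ⬝ᵥ (M *ᵥ y)) := by
  let _ := M.toSeminormedAddCommGroup hM
  let _ := M.toInnerProductSpace hM
  have hinner (u v : ι → ℝ) : inner ℝ u v = u ⬝ᵥ (M *ᵥ v) := dotProduct_comm _ _
  simpa only [norm_eq_sqrt_re_inner (𝕜 := ℝ), hinner, RCLike.re_to_real]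
    using real_inner_le_norm x y

def ccoReturns (S : Matrix ι ι ℝ) (μ e : ι → ℝ) (κ δ : ℝ) : Set ℝ :=
  {m | ∃ x : ι → ℝ, x ⬝ᵥ e = 1 ∧ κ * √(x ⬝ᵥ (S *ᵥ x)) - x ⬝ᵥ μ ≤ δ ∧ m = x ⬝ᵥ μ}

lemma bddAbove_ccoReturns {S : Matrix ι ι ℝ} (hS : S.PosSemidef) {μ e y : ι → ℝ}
    {b κ δ : ℝ} (hy : S *ᵥ y = μ - b • e) (hκ : √(y ⬝ᵥ (S *ᵥ y)) < κ) :
    BddAbove (ccoReturns S μ e κ δ) := by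
  set β := √(y ⬝ᵥ (S *ᵥ y))
  refine ⟨b + β * ((δ + b) / (κ - β)), ?_⟩
  rintro _ ⟨x, hxe, hxδ, rfl⟩
  set σ := √(x ⬝ᵥ (S *ᵥ x))
  have hxy : x ⬝ᵥ (S *ᵥ y) = x ⬝ᵥ μ - b := by simp [hy, dotProduct_sub, hxe]
  have hexcess : x ⬝ᵥ μ - b ≤ σ * β := hxy ▸ hS.dotProduct_mulVec_le_sqrt_mul_sqrt x y
  have hσ : σ ≤ (δ + b) / (κ - β) := by
    rw [le_div_iff₀ (sub_pos.2 hκ)]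
    linarith
  calc x ⬝ᵥ μ ≤ b + β * σ := by linarith
    _ ≤ b + β * ((δ + b) / (κ - β)) := by gcongr

lemma add_smul_mem_ccoReturns {S : Matrix ι ι ℝ} {μ e x₀ y : ι → ℝ} {a b γ κ δ s : ℝ}
    (hx₀ : S *ᵥ x₀ = a⁻¹ • e) (hx₀e : x₀ ⬝ᵥ e = 1) (hx₀μ : x₀ ⬝ᵥ μ = b)
    (hy : S *ᵥ y = μ - b • e) (hye : y ⬝ᵥ e = 0) (hyμ : y ⬝ᵥ μ = γ)
    (h : κ * √(a⁻¹ + s ^ 2 * γ) - (b + s * γ) ≤ δ) :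
    b + s * γ ∈ ccoReturns S μ e κ δ := by
  have he : (x₀ + s • y) ⬝ᵥ e = 1 := by simp [add_dotProduct, hx₀e, hye]
  have hμ : (x₀ + s • y) ⬝ᵥ μ = b + s * γ := by simp [add_dotProduct, hx₀μ, hyμ]
  have hvar : (x₀ + s • y) ⬝ᵥ (S *ᵥ (x₀ + s • y)) = a⁻¹ + s ^ 2 * γ := by
    simp only [mulVec_add, mulVec_smul, hx₀, hy, dotProduct_add, dotProduct_smul,
      dotProduct_sub, he, hμ, smul_eq_mul]
    ring
  exact ⟨x₀ + s • y, he, by rwa [hvar, hμ], hμ.symm⟩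

lemma tangent_frontier_constraint {a b γ κ δ s : ℝ} (ha : 0 < a) (hκ : 0 < κ)
    (hγκ : γ < κ ^ 2) (hs : s * (κ ^ 2 - γ) = δ + b) (hb : 0 ≤ δ + b)
    (h : κ ^ 2 ≤ a * (δ + b) ^ 2 + γ) :
    κ * √(a⁻¹ + s ^ 2 * γ) - (b + s * γ) ≤ δ := by
  have hgap := sub_pos.2 hγκ
  have hs0 : 0 ≤ s := (mul_nonneg_iff_of_pos_right hgap).1 (hs ▸ hb)
  have hprod : 1 ≤ a * (s * (δ + b)) := by
    have : (κ ^ 2 - γ) * (a * (s * (δ + b))) = a * (δ + b) ^ 2 := by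
      linear_combination a * (δ + b) * hs
    exact le_of_mul_le_mul_left (by linarith) hgap
  have hvar : a⁻¹ + s ^ 2 * γ ≤ (s * κ) ^ 2 :=
    calc a⁻¹ + s ^ 2 * γ ≤ s * (δ + b) + s ^ 2 * γ := by
          gcongr; exact (inv_le_iff_one_le_mul₀' ha).mpr hprod
      _ = (s * κ) ^ 2 := by rw [← hs]; ring
  calc κ * √(a⁻¹ + s ^ 2 * γ) - (b + s * γ) ≤ κ * (s * κ) - (b + s * γ) := by
        gcongr; exact Real.sqrt_le_iff.2 ⟨by positivity, hvar⟩
    _ = δ := by linear_combination hs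

section
variable [DecidableEq ι] {S : Matrix ι ι ℝ} {μ e : ι → ℝ} {A B C : ℝ}

lemma exists_minVariancePortfolio (hS : S.PosDef) (hA : A = e ⬝ᵥ (S⁻¹ *ᵥ e))
    (hB : B = μ ⬝ᵥ (S⁻¹ *ᵥ e)) (hA0 : A ≠ 0) :
    ∃ x₀ : ι → ℝ, S *ᵥ x₀ = A⁻¹ • e ∧ x₀ ⬝ᵥ e = 1 ∧ x₀ ⬝ᵥ μ = B / A := by
  refine ⟨A⁻¹ • (S⁻¹ *ᵥ e), ?_, ?_, ?_⟩
  · rw [mulVec_smul, mulVec_mulVec, mul_nonsing_inv S hS.det_pos.ne'.isUnit, one_mulVec]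
  · rw [smul_dotProduct, dotProduct_comm, ← hA, smul_eq_mul, inv_mul_cancel₀ hA0]
  · rw [smul_dotProduct, dotProduct_comm, ← hB, smul_eq_mul, inv_mul_eq_div]

lemma exists_frontierDirection (hS : S.PosDef) (hA : A = e ⬝ᵥ (S⁻¹ *ᵥ e))
    (hB : B = μ ⬝ᵥ (S⁻¹ *ᵥ e)) (hC : C = μ ⬝ᵥ (S⁻¹ *ᵥ μ)) (hA0 : A ≠ 0) :
    ∃ y : ι → ℝ, S *ᵥ y = μ - (B / A) • e ∧ y ⬝ᵥ e = 0 ∧ y ⬝ᵥ μ = C - B ^ 2 / A ∧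
      y ⬝ᵥ (S *ᵥ y) = C - B ^ 2 / A := by
  have hBe : e ⬝ᵥ (S⁻¹ *ᵥ μ) = B := by
    rw [hB, dotProduct_mulVec, ← mulVec_transpose, dotProduct_comm,
      ← conjTranspose_eq_transpose_of_trivial, hS.inv.isHermitian.eq]
  set y := S⁻¹ *ᵥ (μ - (B / A) • e)
  have hye : y ⬝ᵥ e = 0 := by
    simp only [y, dotProduct_comm _ e, mulVec_sub, mulVec_smul, dotProduct_sub,
      dotProduct_smul, hBe, ← hA, smul_eq_mul]
    field_simp; ring
  have hyμ : y ⬝ᵥ μ = C - B ^ 2 / A := by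
    simp only [y, dotProduct_comm _ μ, mulVec_sub, mulVec_smul, dotProduct_sub,
      dotProduct_smul, ← hB, ← hC, smul_eq_mul]
    ring
  have hSy : S *ᵥ y = μ - (B / A) • e := by
    rw [mulVec_mulVec, mul_nonsing_inv S hS.det_pos.ne'.isUnit, one_mulVec]
  refine ⟨y, hSy, hye, hyμ, ?_⟩
  rw [hSy, dotProduct_sub, dotProduct_smul, hyμ, hye, smul_zero, sub_zero]

end

theorem cco_dominates_dro_general (n : ℕ) (S : Matrix (Fin n) (Fin n) ℝ) (hS : S.PosDef)
    (μ e : Fin n → ℝ) (hind : LinearIndependent ℝ ![μ, e])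
    (A B C ρ κ δ : ℝ)
    (hA : A = e ⬝ᵥ (S⁻¹ *ᵥ e)) (hB : B = μ ⬝ᵥ (S⁻¹ *ᵥ e))
    (hC : C = μ ⬝ᵥ (S⁻¹ *ᵥ μ))
    (hκ : 0 < κ) (h1 : C - B ^ 2 / A < κ ^ 2)
    (h2 : κ ^ 2 < δ ^ 2 * A + 2 * δ * B + C) (h3 : 0 < B + δ * A) :
    B / A - Real.sqrt (2 * ρ * A - (A * C - B ^ 2)) / A ≤
      sSup {m : ℝ | ∃ x : Fin n → ℝ, x ⬝ᵥ e = 1 ∧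
        κ * Real.sqrt (x ⬝ᵥ (S *ᵥ x)) - x ⬝ᵥ μ ≤ δ ∧ m = x ⬝ᵥ μ} := by
  have hA0 : 0 < A := hA ▸ hS.inv.dotProduct_mulVec_pos (by simpa using hind.ne_zero 1)
  obtain ⟨x₀, hx₀, hx₀e, hx₀μ⟩ := exists_minVariancePortfolio hS hA hB hA0.ne'
  obtain ⟨y, hy, hye, hyμ, hyy⟩ := exists_frontierDirection hS hA hB hC hA0.ne'
  have hγ : 0 ≤ C - B ^ 2 / A := hyy ▸ hS.posSemidef.dotProduct_mulVec_nonneg y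
  have hgap : 0 < κ ^ 2 - (C - B ^ 2 / A) := sub_pos.2 h1
  set s := (δ + B / A) / (κ ^ 2 - (C - B ^ 2 / A))
  have hc : 0 < δ + B / A := by
    rw [show δ + B / A = (B + δ * A) / A by field_simp; ring]
    exact div_pos h3 hA0
  have h2' : κ ^ 2 ≤ A * (δ + B / A) ^ 2 + (C - B ^ 2 / A) := by
    rw [show A * (δ + B / A) ^ 2 + (C - B ^ 2 / A) = δ ^ 2 * A + 2 * δ * B + C by
      field_simp; ring]
    exact h2.le
  have hmem := add_smul_mem_ccoReturns (s := s) hx₀ hx₀e hx₀μ hy hye hyμ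
    (tangent_frontier_constraint hA0 hκ h1 (div_mul_cancel₀ _ hgap.ne') hc.le h2')
  have hbdd := bddAbove_ccoReturns (δ := δ) hS.posSemidef hy
    (by rw [hyy]; exact (Real.sqrt_lt' hκ).2 h1)
  calc B / A - Real.sqrt (2 * ρ * A - (A * C - B ^ 2)) / A ≤ B / A :=
        sub_le_self _ (by positivity)
    _ ≤ B / A + s * (C - B ^ 2 / A) :=
        le_add_of_nonneg_right (mul_nonneg (div_nonneg hc.le hgap.le) hγ)
    _ ≤ _ := le_csSup hbdd hmem

/-- The CCO problem dominates the DRO (mean-deviation) problem: with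
`v* = B/A − √(2ρA − (AC − B²))/A` the optimal value of the mean-deviation
problem and `ṽ*` the optimal value (supremum) of the chance-constrained
problem `max {xᵀμ : xᵀe = 1, κ√(xᵀΣx) − xᵀμ ≤ δ}`, we have `ṽ* ≥ v*`. -/
theorem cco_dominates_dro (n : ℕ) (S : Matrix (Fin n) (Fin n) ℝ) (hS : S.PosDef)
    (μ e : Fin n → ℝ) (hind : LinearIndependent ℝ ![μ, e])
    (A B C ρ κ δ : ℝ)
    (hA : A = e ⬝ᵥ (S⁻¹ *ᵥ e)) (hB : B = μ ⬝ᵥ (S⁻¹ *ᵥ e))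
    (hC : C = μ ⬝ᵥ (S⁻¹ *ᵥ μ))
    (hρ : 0 < ρ) (hρ' : 2 * ρ > C - B ^ 2 / A)
    (hκ : 0 < κ) (h1 : C - B ^ 2 / A < κ ^ 2)
    (h2 : κ ^ 2 < δ ^ 2 * A + 2 * δ * B + C) (h3 : 0 < B + δ * A) :
    B / A - Real.sqrt (2 * ρ * A - (A * C - B ^ 2)) / A ≤
      sSup {m : ℝ | ∃ x : Fin n → ℝ, x ⬝ᵥ e = 1 ∧
        κ * Real.sqrt (x ⬝ᵥ (S *ᵥ x)) - x ⬝ᵥ μ ≤ δ ∧ m = x ⬝ᵥ μ} :=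
  cco_dominates_dro_general n S hS μ e hind A B C ρ κ δ hA hB hC hκ h1 h2 h3
end

section
/- Let φ: (0,∞) → ℝ be twice continuously differentiable and convex with φ(1) = 0, φ'(1) = 0, and φ''(1) > 0. Then the second-order Taylor expansion of the conjugate φ* at 0 is φ*(s) = s + s²/(2φ''(1)) + o(s²) as s → 0. -/
/-!
Since `φ` is convex, for `s` near `0` the supremum defining `φ*(s)` is attained at the point
`g s` where `φ' (g s) = s`, with `g` the local inverse of `φ'` at `1` given by the inverse
function theorem. Hence `φ*(s) = s g(s) - φ(g(s))` near `0`, and by the envelope identity its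
derivative is `g(s) = 1 + s / φ''(1) + o(s)`. Integrating this first-order expansion once gives
the second-order expansion of `φ*`.
-/

open Filter Set Asymptotics Topology

theorem isLittleO_pow_succ_of_eventually_hasDerivAt {E : Type*} [NormedAddCommGroup E]
    [NormedSpace ℝ E] {f f' : ℝ → E} {x₀ : ℝ} {n : ℕ}
    (hf : ∀ᶠ x in 𝓝 x₀, HasDerivAt f (f' x) x) (hf' : f' =o[𝓝 x₀] fun x ↦ (x - x₀) ^ n) :
    (fun x ↦ f x - f x₀) =o[𝓝 x₀] fun x ↦ (x - x₀) ^ (n + 1) := by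
  obtain ⟨ε, hε, hball⟩ := Metric.eventually_nhds_iff_ball.1 hf
  have hnhds : 𝓝[Metric.ball x₀ ε] x₀ = 𝓝 x₀ := nhdsWithin_eq_nhds.2 (Metric.ball_mem_nhds x₀ hε)
  rw [← hnhds] at hf' ⊢
  exact (convex_ball x₀ ε).isLittleO_pow_succ_real (Metric.mem_ball_self hε)
    (fun x hx ↦ (hball x hx).hasDerivWithinAt) hf'

theorem exists_localInverse_of_contDiffAt {𝕜 : Type*} [RCLike 𝕜] {f : 𝕜 → 𝕜} {a : 𝕜}
    (hf : ContDiffAt 𝕜 1 f a) (ha : deriv f a ≠ 0) :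
    ∃ g : 𝕜 → 𝕜, g (f a) = a ∧ (∀ᶠ y in 𝓝 (f a), f (g y) = y) ∧
      HasDerivAt g (deriv f a)⁻¹ (f a) ∧ ∀ᶠ y in 𝓝 (f a), DifferentiableAt 𝕜 g y := by
  have hstrict : HasStrictDerivAt f (deriv f a) a := hf.hasStrictDerivAt one_ne_zero
  let e : 𝕜 ≃L[𝕜] 𝕜 := ContinuousLinearEquiv.unitsEquivAut 𝕜 (Units.mk0 _ ha)
  have he : HasFDerivAt f (e : 𝕜 →L[𝕜] 𝕜) a :=
    hstrict.hasDerivAt.hasFDerivAt.congr_fderiv (by ext; simp [e])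
  refine ⟨hf.localInverse he one_ne_zero, hf.localInverse_apply_image he one_ne_zero,
    (hf.hasStrictFDerivAt' he one_ne_zero).eventually_right_inverse,
    (hstrict.to_local_left_inverse ha
      (hf.hasStrictFDerivAt' he one_ne_zero).eventually_left_inverse).hasDerivAt, ?_⟩
  filter_upwards [(hf.to_localInverse he one_ne_zero).eventually (by simp)] with y hy
  exact hy.differentiableAt one_ne_zero

theorem ConvexOn.isMinOn_sub_mul_of_hasDerivAt {S : Set ℝ} {f : ℝ → ℝ} {x s : ℝ}
    (hf : ConvexOn ℝ S f) (hx : x ∈ interior S) (hd : HasDerivAt f s x) :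
    IsMinOn (fun t ↦ f t - s * t) S x := by
  have hlin : ConcaveOn ℝ S (fun t ↦ s * t) := (LinearMap.mulLeft ℝ s).concaveOn hf.1
  refine (hf.sub hlin).isMinOn_of_rightDeriv_eq_zero hx ?_
  have hd0 : HasDerivAt (fun t ↦ f t - s * t) 0 x :=
    (hd.sub ((hasDerivAt_id' x).const_mul s)).congr_deriv (by ring)
  exact hd0.hasDerivWithinAt.derivWithin (uniqueDiffWithinAt_Ioi x)

theorem sSup_mul_sub_eq_of_isMinOn {φ : ℝ → ℝ} {s t₀ : ℝ} (ht₀ : 0 < t₀)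
    (hmin : IsMinOn (fun t ↦ φ t - s * t) (Ioi 0) t₀) :
    sSup {y : ℝ | ∃ t : ℝ, 0 < t ∧ y = s * t - φ t} = s * t₀ - φ t₀ := by
  refine IsGreatest.csSup_eq ⟨⟨t₀, ht₀, rfl⟩, ?_⟩
  rintro _ ⟨t, ht, rfl⟩
  have : φ t₀ - s * t₀ ≤ φ t - s * t := hmin (mem_Ioi.2 ht)
  linarith

theorem hasDerivAt_mul_sub_comp_of_hasDerivAt {φ g : ℝ → ℝ} {s g' : ℝ}
    (hg : HasDerivAt g g' s) (hφ : HasDerivAt φ s (g s)) :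
    HasDerivAt (fun x ↦ x * g x - φ (g x)) (g s) s :=
  (((hasDerivAt_id' s).mul hg).sub (hφ.comp s hg)).congr_deriv (by ring)

theorem isLittleO_mul_sub_comp_sub_quadratic {φ g : ℝ → ℝ} {b : ℝ}
    (hgd : ∀ᶠ s in 𝓝 0, DifferentiableAt ℝ g s) (hg : HasDerivAt g b 0)
    (hφ : ∀ᶠ s in 𝓝 0, HasDerivAt φ s (g s)) :
    (fun s ↦ s * g s - φ (g s) + φ (g 0) - (g 0 * s + b / 2 * s ^ 2)) =o[𝓝 0]
      fun s ↦ s ^ 2 := by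
  have hderiv : ∀ᶠ s in 𝓝 0, HasDerivAt (fun s ↦ s * g s - φ (g s) - (g 0 * s + b / 2 * s ^ 2))
      (g s - g 0 - b * s) s := by
    filter_upwards [hgd, hφ] with s hd hs
    have hquad : HasDerivAt (fun s ↦ g 0 * s + b / 2 * s ^ 2) (g 0 + b * s) s :=
      (((hasDerivAt_id' s).const_mul _).add ((hasDerivAt_pow 2 s).const_mul _)).congr_deriv
        (by ring)
    exact ((hasDerivAt_mul_sub_comp_of_hasDerivAt hd.hasDerivAt hs).sub hquad).congr_deriv
      (by ring)
  have hlin : (fun s ↦ g s - g 0 - b * s) =o[𝓝 0] fun s ↦ (s - 0) ^ 1 := by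
    simpa [hasDerivAt_iff_isLittleO, mul_comm] using hg
  exact (isLittleO_pow_succ_of_eventually_hasDerivAt hderiv hlin).congr (fun s ↦ by ring)
    (fun s ↦ by ring)

/-- Second-order expansion of the convex conjugate at `0`: if `φ` is twice
continuously differentiable and convex on `(0,∞)` with `φ(1) = 0`, `φ'(1) = 0`,
`φ''(1) > 0`, then `φ*(s) = s + s²/(2φ''(1)) + o(s²)` as `s → 0`, where
`φ*(s) = sup_{t > 0} (st − φ(t))`. -/
theorem conjugate_second_order_expansion (φ : ℝ → ℝ)
    (hsm : ContDiffOn ℝ 2 φ (Set.Ioi 0))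
    (hconv : ConvexOn ℝ (Set.Ioi 0) φ)
    (h1 : φ 1 = 0) (h1' : deriv φ 1 = 0) (h1'' : 0 < deriv (deriv φ) 1) :
    Asymptotics.IsLittleO (nhds (0 : ℝ))
      (fun s : ℝ => sSup {y : ℝ | ∃ t : ℝ, 0 < t ∧ y = s * t - φ t} -
        (s + s ^ 2 / (2 * deriv (deriv φ) 1)))
      (fun s : ℝ => s ^ 2) := by
  have hφ' : ∀ t ∈ Ioi (0 : ℝ), HasDerivAt φ (deriv φ t) t := fun t ht ↦
    ((hsm.contDiffAt (isOpen_Ioi.mem_nhds ht)).differentiableAt (by norm_num)).hasDerivAt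
  have hψ : ContDiffAt ℝ 1 (deriv φ) 1 :=
    (hsm.deriv_of_isOpen isOpen_Ioi (by norm_num)).contDiffAt (Ioi_mem_nhds one_pos)
  obtain ⟨g, hg0, hφg, hg, hgd⟩ := exists_localInverse_of_contDiffAt hψ h1''.ne'
  rw [h1'] at hg0 hφg hg hgd
  have hmax : ∀ᶠ s in 𝓝 (0 : ℝ), 0 < g s ∧ HasDerivAt φ s (g s) := by
    filter_upwards [hφg, (hg0 ▸ hg.continuousAt.tendsto).eventually_const_lt one_pos]
      with s hs hpos
    exact ⟨hpos, (hφ' _ hpos).congr_deriv hs⟩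
  refine (isLittleO_mul_sub_comp_sub_quadratic hgd hg (hmax.mono fun _ h ↦ h.2)).congr' ?_
    EventuallyEq.rfl
  filter_upwards [hmax] with s ⟨hpos, hs⟩
  rw [sSup_mul_sub_eq_of_isMinOn hpos
    (hconv.isMinOn_sub_mul_of_hasDerivAt (by rwa [interior_Ioi]) hs), hg0, h1]
  ring
end

section
/- Let Σ be symmetric positive definite, μ, e ∈ ℝⁿ linearly independent, and suppose x̃* ∈ ℝⁿ is optimal for max {xᵀμ : xᵀe = 1, κ√(xᵀΣx) − xᵀμ ≤ δ} with κ, δ satisfying C − B²/A < κ² < δ²A + 2δB + C and B + δA > 0 (A, B, C as before). Then the chance/VaR constraint is active at the optimum: κ√(x̃*ᵀΣx̃*) − x̃*ᵀμ = δ. -/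
/-!
Linear independence of `μ` and `e` gives a direction `d` with `dᵀe = 0` and `dᵀμ > 0`. Moving
from a feasible point along `d` keeps `xᵀe = 1` and strictly increases `xᵀμ`; since the constraint
function is continuous, a short step stays feasible whenever the constraint is slack. Hence a
maximizer cannot have a slack constraint.
-/

open Matrix

theorem exists_dotProduct_eq_zero_and_pos_of_linearIndependent {ι K : Type*} [Fintype ι]
    [Field K] [LinearOrder K] [IsStrictOrderedRing K] {v w : ι → K}
    (h : LinearIndependent K ![v, w]) : ∃ d : ι → K, d ⬝ᵥ w = 0 ∧ 0 < d ⬝ᵥ v := by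
  obtain ⟨hw, hv⟩ := linearIndependent_fin2.mp h
  simp only [Matrix.cons_val_one, Matrix.cons_val_zero] at hw hv
  have hww : w ⬝ᵥ w ≠ 0 := fun h ↦ hw (dotProduct_self_eq_zero.mp h)
  set c := v ⬝ᵥ w / w ⬝ᵥ w
  have hdw : (v - c • w) ⬝ᵥ w = 0 := by
    rw [sub_dotProduct, smul_dotProduct, smul_eq_mul, div_mul_cancel₀ _ hww, sub_self]
  have hd : v - c • w ≠ 0 := fun h ↦ hv c (sub_eq_zero.mp h).symm
  have hdd : 0 < (v - c • w) ⬝ᵥ (v - c • w) :=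
    (Finset.sum_nonneg fun i _ ↦ mul_self_nonneg _).lt_of_ne' (mt dotProduct_self_eq_zero.mp hd)
  refine ⟨v - c • w, hdw, ?_⟩
  rwa [dotProduct_sub, dotProduct_smul, hdw, smul_zero, sub_zero] at hdd

theorem IsMaxOn.eq_of_sublevel_of_mem_ker {E : Type*} [AddCommGroup E] [Module ℝ E]
    [TopologicalSpace E] [ContinuousAdd E] [ContinuousSMul ℝ E] {ℓ φ : Module.Dual ℝ E}
    {g : E → ℝ} {x d : E} {δ : ℝ} (hmax : IsMaxOn ℓ {y | φ y = φ x ∧ g y ≤ δ} x)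
    (hφd : φ d = 0) (hℓd : 0 < ℓ d) (hg : ContinuousAt g x) (hx : g x ≤ δ) : g x = δ := by
  refine hx.eq_of_not_lt fun hlt ↦ ?_
  have hline : ContinuousAt (fun t : ℝ ↦ g (x + t • d)) 0 :=
    ContinuousAt.comp (by simpa using hg) (by fun_prop)
  have hslack : ∀ᶠ t in nhdsWithin (0 : ℝ) (Set.Ioi 0), g (x + t • d) < δ :=
    (hline.eventually_lt continuousAt_const (by simpa using hlt)).filter_mono nhdsWithin_le_nhds
  obtain ⟨t, hgt, ht⟩ := (hslack.and self_mem_nhdsWithin).exists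
  have hle : ℓ (x + t • d) ≤ ℓ x := hmax ⟨by simp [hφd], hgt.le⟩
  simp only [map_add, map_smul, smul_eq_mul] at hle
  nlinarith [mul_pos (Set.mem_Ioi.mp ht) hℓd]

theorem cco_constraint_active_general (n : ℕ) (S : Matrix (Fin n) (Fin n) ℝ)
    (μ e : Fin n → ℝ) (hind : LinearIndependent ℝ ![μ, e])
    (κ δ : ℝ)
    (xstar : Fin n → ℝ)
    (hfeas1 : xstar ⬝ᵥ e = 1)
    (hfeas2 : κ * Real.sqrt (xstar ⬝ᵥ (S *ᵥ xstar)) - xstar ⬝ᵥ μ ≤ δ)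
    (hopt : ∀ y : Fin n → ℝ, y ⬝ᵥ e = 1 →
      κ * Real.sqrt (y ⬝ᵥ (S *ᵥ y)) - y ⬝ᵥ μ ≤ δ → y ⬝ᵥ μ ≤ xstar ⬝ᵥ μ) :
    κ * Real.sqrt (xstar ⬝ᵥ (S *ᵥ xstar)) - xstar ⬝ᵥ μ = δ := by
  obtain ⟨d, hde, hdμ⟩ := exists_dotProduct_eq_zero_and_pos_of_linearIndependent hind
  have hg : Continuous fun y ↦ κ * Real.sqrt (y ⬝ᵥ (S *ᵥ y)) - y ⬝ᵥ μ := by fun_prop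
  have hmax : IsMaxOn ((dotProductBilin ℝ ℝ).flip μ)
      {y | (dotProductBilin ℝ ℝ).flip e y = (dotProductBilin ℝ ℝ).flip e xstar ∧
        κ * Real.sqrt (y ⬝ᵥ (S *ᵥ y)) - y ⬝ᵥ μ ≤ δ} xstar := by
    rintro y ⟨hy, hgy⟩
    simp only [LinearMap.flip_apply, dotProductBilin_apply_apply, hfeas1] at hy ⊢
    exact hopt y hy hgy
  exact hmax.eq_of_sublevel_of_mem_ker (d := d) (by simpa using hde) (by simpa using hdμ)
    hg.continuousAt hfeas2

/-- The VaR/chance constraint is active at any optimum of the chance-constrained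
portfolio problem: if `x̃*` is feasible (`x̃*ᵀe = 1`, `κ√(x̃*ᵀΣx̃*) − x̃*ᵀμ ≤ δ`)
and maximizes `xᵀμ` over the feasible set, then
`κ√(x̃*ᵀΣx̃*) − x̃*ᵀμ = δ`. -/
theorem cco_constraint_active (n : ℕ) (S : Matrix (Fin n) (Fin n) ℝ)
    (hS : S.PosDef) (μ e : Fin n → ℝ) (hind : LinearIndependent ℝ ![μ, e])
    (A B C κ δ : ℝ)
    (hA : A = e ⬝ᵥ (S⁻¹ *ᵥ e)) (hB : B = μ ⬝ᵥ (S⁻¹ *ᵥ e))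
    (hC : C = μ ⬝ᵥ (S⁻¹ *ᵥ μ))
    (hκ : 0 < κ) (h1 : C - B ^ 2 / A < κ ^ 2)
    (h2 : κ ^ 2 < δ ^ 2 * A + 2 * δ * B + C) (h3 : 0 < B + δ * A)
    (xstar : Fin n → ℝ)
    (hfeas1 : xstar ⬝ᵥ e = 1)
    (hfeas2 : κ * Real.sqrt (xstar ⬝ᵥ (S *ᵥ xstar)) - xstar ⬝ᵥ μ ≤ δ)
    (hopt : ∀ y : Fin n → ℝ, y ⬝ᵥ e = 1 →
      κ * Real.sqrt (y ⬝ᵥ (S *ᵥ y)) - y ⬝ᵥ μ ≤ δ → y ⬝ᵥ μ ≤ xstar ⬝ᵥ μ) :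
    κ * Real.sqrt (xstar ⬝ᵥ (S *ᵥ xstar)) - xstar ⬝ᵥ μ = δ :=
  cco_constraint_active_general n S μ e hind κ δ xstar hfeas1 hfeas2 hopt
end
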